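/- arXiv:1110.3098 — 3 statements merged into one kernel-verified Lean document; each statement's English description precedes it below -/
import Mathlib

section
/- For every q ∈ ℕ and every x ≥ 0, the Laguerre polynomial L_q satisfies |e^{-x/2} L_q(x)| ≤ 1. -/
/-!
Let `Heₙ` be the probabilists' Hermite polynomials, orthogonal for the weight `e^{-s²/2}` with
`∫ Heₙ² e^{-s²/2} = n! √(2π)`, and `hₙ(s) = Heₙ(s) e^{-s²/4}`. Expanding both translates
`Heₙ(s ∓ b)` by Taylor's formula (`Heₙ' = n Heₙ₋₁`) and using orthogonality gives
`∫ hₙ(s - b) hₙ(s + b) ds = n! √(2π) e^{-b²/2} Lₙ(b²)`, while each translate has squared norm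
`n! √(2π)`. Hence `|e^{-b²/2} Lₙ(b²)| ≤ 1` by `|∫ u v| ≤ (∫ u² + ∫ v²) / 2`.
-/

open Real

/-- The `q`-th Laguerre polynomial `L_q(t) = Σ_{k=0}^q (q choose k) (-t)^k / k!`. -/
noncomputable def laguerre (q : ℕ) (t : ℝ) : ℝ :=
  ∑ k ∈ Finset.range (q + 1), (q.choose k : ℝ) * (-t) ^ k / (k.factorial : ℝ)

open Polynomial MeasureTheory Finset
open scoped Nat

namespace Polynomial

theorem derivative_hermite_succ (n : ℕ) :
    derivative (hermite (n + 1)) = (n + 1) • hermite n := by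
  induction n with
  | zero => simp [hermite_zero]
  | succ n ih =>
    rw [hermite_succ (n + 1), derivative_sub, derivative_mul, ih, derivative_X, one_mul,
      derivative_smul, mul_smul_comm, add_sub_assoc, ← smul_sub, ← hermite_succ,
      succ_nsmul' _ (n + 1)]

theorem iterate_derivative_hermite (n k : ℕ) :
    derivative^[k] (hermite (n + k)) = (n + k).descFactorial k • hermite n := by
  induction k generalizing n with
  | zero => simp
  | succ k ih =>
    rw [Function.iterate_succ_apply, ← add_assoc, derivative_hermite_succ,
      iterate_derivative_smul, ih, smul_smul, Nat.succ_descFactorial_succ]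

theorem iterate_derivative_hermite_self (n : ℕ) : derivative^[n] (hermite n) = C (n ! : ℤ) := by
  simpa [Nat.descFactorial_self, hermite_zero, ← C_mul] using iterate_derivative_hermite 0 n

theorem hasseDeriv_hermite (k n : ℕ) :
    hasseDeriv k (hermite n) = n.choose k • hermite (n - k) := by
  apply smul_right_injective ℤ[X] (Nat.factorial_ne_zero k)
  simp only [← LinearMap.smul_apply, factorial_smul_hasseDeriv]
  rcases le_or_gt k n with hkn | hnk
  · obtain ⟨m, rfl⟩ := Nat.exists_eq_add_of_le' hkn
    rw [iterate_derivative_hermite, Nat.add_sub_cancel, smul_smul,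
      Nat.descFactorial_eq_factorial_mul_choose]
  · rw [iterate_derivative_eq_zero (by rwa [natDegree_hermite]), Nat.choose_eq_zero_of_lt hnk,
      zero_smul, smul_zero]

theorem hasseDeriv_map {R S : Type*} [Semiring R] [Semiring S] (f : R →+* S) (k : ℕ) (p : R[X]) :
    hasseDeriv k (p.map f) = (hasseDeriv k p).map f := by
  ext n
  simp [hasseDeriv_coeff, coeff_map]

theorem eval_add_eq_sum_hasseDeriv {R : Type*} [CommRing R] {p : R[X]} {n : ℕ}
    (hn : p.natDegree < n) (x y : R) :
    p.eval (x + y) = ∑ i ∈ range n, (hasseDeriv i p).eval x * y ^ i := by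
  rw [add_comm, ← taylor_eval, eval_eq_sum_range' (by rwa [natDegree_taylor])]
  simp only [taylor_coeff]

theorem aeval_add_hermite {S : Type*} [CommRing S] (n : ℕ) (x y : S) :
    aeval (x + y) (hermite n) =
      ∑ i ∈ range (n + 1), n.choose i * aeval x (hermite (n - i)) * y ^ i := by
  have hdeg : ((hermite n).map (algebraMap ℤ S)).natDegree < n + 1 :=
    (natDegree_map_le.trans natDegree_hermite.le).trans_lt n.lt_succ_self
  rw [← eval_map_algebraMap, eval_add_eq_sum_hasseDeriv hdeg]
  refine sum_congr rfl fun i _ ↦ ?_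
  rw [hasseDeriv_map, hasseDeriv_hermite, nsmul_eq_mul, Polynomial.map_mul, eval_mul,
    eval_map_algebraMap, eval_map_algebraMap, map_natCast]

end Polynomial

noncomputable def gaussianWeight (s : ℝ) : ℝ := Real.exp (-(s ^ 2 / 2))

theorem gaussianWeight_eq_exp_neg_mul_sq (s : ℝ) :
    gaussianWeight s = Real.exp (-(1 / 2) * s ^ 2) := by
  rw [gaussianWeight]; ring_nf

theorem hasDerivAt_gaussianWeight (s : ℝ) :
    HasDerivAt gaussianWeight (-s * gaussianWeight s) s := by
  refine ((hasDerivAt_pow 2 s).div_const 2).neg.exp.congr_deriv ?_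
  simp only [gaussianWeight, Pi.neg_apply]
  ring

theorem integral_gaussianWeight : ∫ s, gaussianWeight s = √(2 * π) := by
  simp_rw [gaussianWeight_eq_exp_neg_mul_sq, integral_gaussian]
  ring_nf

theorem integrable_pow_mul_gaussianWeight (n : ℕ) :
    Integrable fun s ↦ s ^ n * gaussianWeight s := by
  simpa [gaussianWeight_eq_exp_neg_mul_sq, Real.rpow_natCast] using
    integrable_rpow_mul_exp_neg_mul_sq (b := 1 / 2) (by norm_num) (s := n)
      (by linarith [n.cast_nonneg (α := ℝ)])

theorem integrable_eval_mul_gaussianWeight (p : ℝ[X]) :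
    Integrable fun s ↦ p.eval s * gaussianWeight s := by
  simp_rw [eval_eq_sum_range, sum_mul, mul_assoc]
  exact integrable_finsetSum _ fun i _ ↦ (integrable_pow_mul_gaussianWeight i).const_mul _

theorem integrable_eval_mul_aeval_mul_gaussianWeight (p : ℝ[X]) (q : ℤ[X]) :
    Integrable fun s ↦ p.eval s * aeval s q * gaussianWeight s := by
  simpa [← eval_map_algebraMap] using
    integrable_eval_mul_gaussianWeight (p * q.map (algebraMap ℤ ℝ))

theorem integrable_hermite_mul_hermite_mul_gaussianWeight (m n : ℕ) :
    Integrable fun s ↦ aeval s (hermite m) * aeval s (hermite n) * gaussianWeight s := by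
  simpa only [eval_map_algebraMap] using
    integrable_eval_mul_aeval_mul_gaussianWeight ((hermite m).map (algebraMap ℤ ℝ)) (hermite n)

theorem hasDerivAt_aeval_hermite_mul_gaussianWeight (k : ℕ) (s : ℝ) :
    HasDerivAt (fun s ↦ aeval s (hermite k) * gaussianWeight s)
      (-(aeval s (hermite (k + 1)) * gaussianWeight s)) s := by
  refine (((hermite k).hasDerivAt_aeval s).mul (hasDerivAt_gaussianWeight s)).congr_deriv ?_
  rw [hermite_succ, map_sub, map_mul, aeval_X]
  ring

theorem integral_eval_mul_hermite_succ (p : ℝ[X]) (k : ℕ) :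
    ∫ s, p.eval s * aeval s (hermite (k + 1)) * gaussianWeight s =
      ∫ s, (derivative p).eval s * aeval s (hermite k) * gaussianWeight s := by
  have h := integral_mul_deriv_eq_deriv_mul_of_integrable (fun s _ ↦ p.hasDerivAt s)
    (fun s _ ↦ hasDerivAt_aeval_hermite_mul_gaussianWeight k s) ?_ ?_ ?_
  · simpa [mul_assoc, integral_neg] using h
  · simpa [Pi.mul_def, mul_assoc] using
      (integrable_eval_mul_aeval_mul_gaussianWeight p (hermite (k + 1))).neg
  · simpa [Pi.mul_def, mul_assoc] using
      integrable_eval_mul_aeval_mul_gaussianWeight (derivative p) (hermite k)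
  · simpa [Pi.mul_def, mul_assoc] using
      integrable_eval_mul_aeval_mul_gaussianWeight p (hermite k)

theorem integral_eval_mul_hermite (p : ℝ[X]) (k : ℕ) :
    ∫ s, p.eval s * aeval s (hermite k) * gaussianWeight s =
      ∫ s, (derivative^[k] p).eval s * gaussianWeight s := by
  induction k generalizing p with
  | zero => simp [hermite_zero]
  | succ k ih => rw [integral_eval_mul_hermite_succ, ih, ← Function.iterate_succ_apply]

theorem integral_aeval_mul_hermite (p : ℤ[X]) (k : ℕ) :
    ∫ s, aeval s p * aeval s (hermite k) * gaussianWeight s =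
      ∫ s, aeval s (derivative^[k] p) * gaussianWeight s := by
  simpa only [eval_map_algebraMap, iterate_derivative_map] using
    integral_eval_mul_hermite (p.map (algebraMap ℤ ℝ)) k

theorem integral_hermite_mul_hermite_of_lt {m n : ℕ} (h : m < n) :
    ∫ s, aeval s (hermite m) * aeval s (hermite n) * gaussianWeight s = 0 := by
  rw [integral_aeval_mul_hermite, iterate_derivative_eq_zero (natDegree_hermite.trans_lt h)]
  simp

theorem integral_hermite_mul_hermite (m n : ℕ) :
    ∫ s, aeval s (hermite m) * aeval s (hermite n) * gaussianWeight s =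
      if m = n then m ! * √(2 * π) else 0 := by
  rcases lt_trichotomy m n with h | rfl | h
  · rw [integral_hermite_mul_hermite_of_lt h, if_neg h.ne]
  · rw [if_pos rfl, integral_aeval_mul_hermite, iterate_derivative_hermite_self]
    simp [integral_const_mul, integral_gaussianWeight]
  · simp_rw [mul_comm (aeval _ (hermite m)) (aeval _ (hermite n))]
    rw [integral_hermite_mul_hermite_of_lt h, if_neg h.ne']

theorem integral_hermite_sub_mul_hermite_add (q : ℕ) (b : ℝ) :
    ∫ s, aeval (s - b) (hermite q) * aeval (s + b) (hermite q) * gaussianWeight s =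
      q ! * √(2 * π) * laguerre q (b ^ 2) := by
  have hexpand : ∀ s, aeval (s - b) (hermite q) * aeval (s + b) (hermite q) * gaussianWeight s =
      ∑ i ∈ range (q + 1), ∑ j ∈ range (q + 1), q.choose i * (-b) ^ i * (q.choose j * b ^ j) *
        (aeval s (hermite (q - i)) * aeval s (hermite (q - j)) * gaussianWeight s) := by
    intro s
    rw [sub_eq_add_neg, aeval_add_hermite, aeval_add_hermite, sum_mul_sum, sum_mul]
    refine sum_congr rfl fun i _ ↦ ?_
    rw [sum_mul]
    exact sum_congr rfl fun j _ ↦ by ring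
  have hintegrable := integrable_hermite_mul_hermite_mul_gaussianWeight
  simp_rw [hexpand]
  rw [integral_finsetSum _ fun i _ ↦
      integrable_finsetSum _ fun j _ ↦ (hintegrable _ _).const_mul _,
    laguerre, mul_sum]
  refine sum_congr rfl fun i hi ↦ ?_
  have hiq : i ≤ q := Nat.lt_succ_iff.mp (mem_range.mp hi)
  rw [integral_finsetSum _ fun j _ ↦ (hintegrable _ _).const_mul _, sum_eq_single_of_mem i hi]
  · have hfact : (q.choose i : ℝ) * i ! * (q - i)! = q ! := by
      exact_mod_cast Nat.choose_mul_factorial_mul_factorial hiq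
    rw [integral_const_mul, integral_hermite_mul_hermite, if_pos rfl, ← hfact]
    field_simp
    ring
  · intro j hj hji
    have hjq : j ≤ q := Nat.lt_succ_iff.mp (mem_range.mp hj)
    rw [integral_const_mul, integral_hermite_mul_hermite, if_neg (by omega), mul_zero]

theorem abs_integral_mul_le_half_add {α : Type*} [MeasurableSpace α] {μ : Measure α}
    {u v : α → ℝ} (hu : MemLp u 2 μ) (hv : MemLp v 2 μ) :
    |∫ a, u a * v a ∂μ| ≤ ((∫ a, u a ^ 2 ∂μ) + ∫ a, v a ^ 2 ∂μ) / 2 := by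
  have hu2 := hu.integrable_sq
  have hv2 := hv.integrable_sq
  calc |∫ a, u a * v a ∂μ| ≤ ∫ a, |u a * v a| ∂μ := abs_integral_le_integral_abs
    _ ≤ ∫ a, (u a ^ 2 + v a ^ 2) / 2 ∂μ :=
        integral_mono (hu.integrable_mul hv).abs ((hu2.add hv2).div_const 2) fun a ↦ by
          rw [abs_mul, ← sq_abs (u a), ← sq_abs (v a)]
          nlinarith [sq_nonneg (|u a| - |v a|)]
    _ = ((∫ a, u a ^ 2 ∂μ) + ∫ a, v a ^ 2 ∂μ) / 2 := by rw [integral_div, integral_add hu2 hv2]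

noncomputable def hermiteFunction (n : ℕ) (s : ℝ) : ℝ :=
  aeval s (hermite n) * Real.exp (-(s ^ 2 / 4))

theorem continuous_hermiteFunction (n : ℕ) : Continuous (hermiteFunction n) := by
  unfold hermiteFunction; fun_prop

theorem hermiteFunction_sq (n : ℕ) (s : ℝ) :
    hermiteFunction n s ^ 2 = aeval s (hermite n) * aeval s (hermite n) * gaussianWeight s := by
  rw [hermiteFunction, gaussianWeight, mul_pow, sq, ← Real.exp_nat_mul]
  ring_nf

theorem hermiteFunction_sub_mul_hermiteFunction_add (n : ℕ) (s b : ℝ) :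
    hermiteFunction n (s - b) * hermiteFunction n (s + b) = Real.exp (-b ^ 2 / 2) *
      (aeval (s - b) (hermite n) * aeval (s + b) (hermite n) * gaussianWeight s) := by
  have hexp : Real.exp (-((s - b) ^ 2 / 4)) * Real.exp (-((s + b) ^ 2 / 4)) =
      Real.exp (-b ^ 2 / 2) * gaussianWeight s := by
    rw [gaussianWeight, ← Real.exp_add, ← Real.exp_add]; ring_nf
  rw [hermiteFunction, hermiteFunction]
  linear_combination aeval (s - b) (hermite n) * aeval (s + b) (hermite n) * hexp

theorem memLp_hermiteFunction_comp_sub (n : ℕ) (c : ℝ) :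
    MemLp (fun s ↦ hermiteFunction n (s - c)) 2 := by
  refine (memLp_two_iff_integrable_sq ((continuous_hermiteFunction n).comp
    (continuous_sub_right c)).aestronglyMeasurable).mpr ?_
  exact ((integrable_hermite_mul_hermite_mul_gaussianWeight n n).comp_sub_right c).congr
    (ae_of_all _ fun s ↦ (hermiteFunction_sq n (s - c)).symm)

theorem integral_hermiteFunction_comp_sub_sq (n : ℕ) (c : ℝ) :
    ∫ s, hermiteFunction n (s - c) ^ 2 = n ! * √(2 * π) := by
  simp_rw [hermiteFunction_sq]
  rw [integral_sub_right_eq_self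
    (fun s ↦ aeval s (hermite n) * aeval s (hermite n) * gaussianWeight s),
    integral_hermite_mul_hermite, if_pos rfl]

/-- `|e^{-x/2} L_q(x)| ≤ 1` for all `q ∈ ℕ` and `x ≥ 0`. -/
theorem laguerre_exp_bound (q : ℕ) (x : ℝ) (hx : 0 ≤ x) :
    |Real.exp (-x / 2) * laguerre q x| ≤ 1 := by
  obtain ⟨b, rfl⟩ : ∃ b, x = b ^ 2 := ⟨√x, (sq_sqrt hx).symm⟩
  have h := abs_integral_mul_le_half_add (memLp_hermiteFunction_comp_sub q b)
    (memLp_hermiteFunction_comp_sub q (-b))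
  simp_rw [integral_hermiteFunction_comp_sub_sq, sub_neg_eq_add,
    hermiteFunction_sub_mul_hermiteFunction_add, integral_const_mul,
    integral_hermite_sub_mul_hermite_add] at h
  have hN : 0 < (q ! : ℝ) * √(2 * π) := by positivity
  rw [mul_left_comm, abs_mul, abs_of_pos hN, add_self_div_two] at h
  exact le_of_mul_le_mul_left (by linarith) hN
end

section
/- For V(x) = ⟨x⟩^{-ρ} on ℝ² with ρ > 1, B₀ > 0, and k > 0, let V_B(x,y) = V(−B^{-1/2}y, −B^{-1/2}x) and let δ_k be the normalized arc-length measure on the circle of radius k centered at 0 in ℝ². Then sup_{z∈ℝ²} |(V_B * δ_k)(z)| ≤ C B^{1/2}/k, uniformly in B ≥ B₀ and k > 0, where C depends only on ρ. -/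
/-!
Write `z = a e^{iφ}`. The law of cosines turns the integrand into
`(1 + B⁻¹ (a² + k² - 2ak cos (θ - φ)))^{-ρ/2}`, and periodicity moves the integral
to `[-π, π]`. There `a² + k² - 2ak cos t ≥ (kt/π)²` uniformly in `a ≥ 0`, so the
integrand is at most `⟨kt/(π√B)⟩^{-ρ}`, whose integral over `ℝ` is
`(π√B/k) ∫ ⟨u⟩^{-ρ} du`, finite because `ρ > 1`.
-/

open Real MeasureTheory intervalIntegral

theorem Function.Periodic.intervalIntegral_comp_sub_eq {E : Type*} [NormedAddCommGroup E]
    [NormedSpace ℝ E] {f : ℝ → E} {T : ℝ} (hf : Function.Periodic f T) (φ a b : ℝ) :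
    ∫ θ in a..a + T, f (θ - φ) = ∫ t in b..b + T, f t := by
  rw [integral_comp_sub_right, add_sub_right_comm]
  exact hf.intervalIntegral_add_eq _ _

theorem exists_polar_sq_dist_eq (z : ℝ × ℝ) :
    ∃ a φ : ℝ, 0 ≤ a ∧ ∀ k θ : ℝ,
      (z.1 - k * cos θ) ^ 2 + (z.2 - k * sin θ) ^ 2
        = a ^ 2 + k ^ 2 - 2 * a * k * cos (θ - φ) := by
  set w : ℂ := ⟨z.1, z.2⟩
  refine ⟨‖w‖, w.arg, norm_nonneg w, fun k θ => ?_⟩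
  have hre : ‖w‖ * cos w.arg = z.1 := Complex.norm_mul_cos_arg w
  have him : ‖w‖ * sin w.arg = z.2 := Complex.norm_mul_sin_arg w
  rw [← hre, ← him, cos_sub]
  linear_combination ‖w‖ ^ 2 * sin_sq_add_cos_sq w.arg + k ^ 2 * sin_sq_add_cos_sq θ

theorem sq_add_sq_sub_two_mul_mul_cos_nonneg (a k t : ℝ) :
    0 ≤ a ^ 2 + k ^ 2 - 2 * a * k * cos t := by
  have h : a ^ 2 + k ^ 2 - 2 * a * k * cos t = (a - k * cos t) ^ 2 + (k * sin t) ^ 2 := by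
    linear_combination -k ^ 2 * sin_sq_add_cos_sq t
  rw [h]
  positivity

theorem sq_mul_le_pi_sq_mul_sq_add_sq_sub_mul_cos {a k t : ℝ} (ha : 0 ≤ a) (hk : 0 ≤ k)
    (ht : |t| ≤ π) : (k * t) ^ 2 ≤ π ^ 2 * (a ^ 2 + k ^ 2 - 2 * a * k * cos t) := by
  have hπ := pi_pos
  set s := t ^ 2 / π ^ 2
  have hs0 : 0 ≤ s := by positivity
  have hs1 : s ≤ 1 :=
    div_le_one_of_le₀ (sq_le_sq' (abs_le.1 ht).1 (abs_le.1 ht).2) (by positivity)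
  have hcos : cos t ≤ 1 - 2 * s := by
    have := cos_le_one_sub_mul_cos_sq ht
    rwa [show 2 / π ^ 2 * t ^ 2 = 2 * s by ring] at this
  have hkt : (k * t) ^ 2 = π ^ 2 * (k ^ 2 * s) := by simp only [s]; field_simp
  rw [hkt]
  gcongr
  -- The right side is at least `a² - 2ak(1 - 2s) + k²(1 - s)`: a sum of nonnegative terms
  -- if `2s ≥ 1`, and `(a - k(1 - 2s))² + k²s(3 - 4s)` otherwise.
  have hak : 0 ≤ a * k := mul_nonneg ha hk
  rcases le_total (2 * s) 1 with h | h
  · nlinarith [sq_nonneg (a - k * (1 - 2 * s)), mul_nonneg (mul_nonneg hk hk) hs0]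
  · nlinarith [mul_nonneg (mul_nonneg hk hk) (sub_nonneg.2 hs1)]

theorem integrable_one_add_sq_rpow_neg {ρ : ℝ} (hρ : 1 < ρ) :
    Integrable fun u : ℝ => (1 + u ^ 2) ^ (-(ρ / 2)) := by
  simpa [norm_eq_abs, sq_abs, neg_div] using
    integrable_rpow_neg_one_add_norm_sq (E := ℝ) (μ := volume) (r := ρ) (by simpa using hρ)

theorem integral_one_add_sq_rpow_neg_pos {ρ : ℝ} (hρ : 1 < ρ) :
    0 < ∫ u : ℝ, (1 + u ^ 2) ^ (-(ρ / 2)) := by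
  rw [integral_pos_iff_support_of_nonneg (fun u => by positivity)
    (integrable_one_add_sq_rpow_neg hρ)]
  have hsupp : Function.support (fun u : ℝ => (1 + u ^ 2) ^ (-(ρ / 2))) = Set.univ :=
    Function.support_eq_univ fun u => by positivity
  simp [hsupp]

theorem intervalIntegral_comp_mul_le_inv_mul_integral {f : ℝ → ℝ} (hf : Integrable f)
    (hf0 : 0 ≤ f) {m a b : ℝ} (hm : 0 < m) (hab : a ≤ b) :
    ∫ t in a..b, f (m * t) ≤ m⁻¹ * ∫ u, f u := by
  rw [integral_comp_mul_left f hm.ne', smul_eq_mul,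
    integral_of_le (mul_le_mul_of_nonneg_left hab hm.le)]
  exact mul_le_mul_of_nonneg_left (setIntegral_le_integral hf (.of_forall hf0)) (by positivity)

theorem intervalIntegral_one_add_inv_mul_rpow_neg_le {ρ a k B : ℝ} (hρ : 1 < ρ) (ha : 0 ≤ a)
    (hk : 0 < k) (hB : 0 < B) :
    ∫ t in -π..π, (1 + B⁻¹ * (a ^ 2 + k ^ 2 - 2 * a * k * cos t)) ^ (-(ρ / 2))
      ≤ π * √B / k * ∫ u : ℝ, (1 + u ^ 2) ^ (-(ρ / 2)) := by
  have hπ := pi_pos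
  set m := k / (π * √B)
  have hm : 0 < m := by positivity
  have hbase : ∀ t, 0 < 1 + B⁻¹ * (a ^ 2 + k ^ 2 - 2 * a * k * cos t) := fun t => by
    have := sq_add_sq_sub_two_mul_mul_cos_nonneg a k t
    positivity
  have hpointwise : ∀ t ∈ Set.Icc (-π) π,
      (1 + B⁻¹ * (a ^ 2 + k ^ 2 - 2 * a * k * cos t)) ^ (-(ρ / 2))
        ≤ (1 + (m * t) ^ 2) ^ (-(ρ / 2)) := by
    intro t ht
    have hmt : (m * t) ^ 2 = B⁻¹ * ((k * t) ^ 2 / π ^ 2) := by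
      simp only [m]
      rw [div_mul_eq_mul_div, div_pow, mul_pow, mul_pow, sq_sqrt hB.le]
      field_simp
    have hdist := sq_mul_le_pi_sq_mul_sq_add_sq_sub_mul_cos ha hk.le (abs_le.2 ht)
    refine rpow_le_rpow_of_nonpos (by positivity) ?_ (by linarith)
    rw [hmt]
    gcongr
    exact (div_le_iff₀' (by positivity)).2 hdist
  calc _ ≤ ∫ t in -π..π, (1 + (m * t) ^ 2) ^ (-(ρ / 2)) := by
        refine integral_mono_on (by linarith) ?_ ?_ hpointwise
        · exact ((by fun_prop : Continuous fun t =>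
            1 + B⁻¹ * (a ^ 2 + k ^ 2 - 2 * a * k * cos t)).rpow_const
              fun t => .inl (hbase t).ne').intervalIntegrable _ _
        · exact ((by fun_prop : Continuous fun t => 1 + (m * t) ^ 2).rpow_const
            fun t => .inl (by positivity)).intervalIntegrable _ _
    _ ≤ m⁻¹ * ∫ u : ℝ, (1 + u ^ 2) ^ (-(ρ / 2)) :=
        intervalIntegral_comp_mul_le_inv_mul_integral (integrable_one_add_sq_rpow_neg hρ)
          (fun u => by positivity) hm (by linarith)
    _ = π * √B / k * ∫ u : ℝ, (1 + u ^ 2) ^ (-(ρ / 2)) := by rw [inv_div]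

theorem exists_intervalIntegral_circle_eq_intervalIntegral_cos {B : ℝ} (hB : 0 < B) (p k : ℝ)
    (z : ℝ × ℝ) : ∃ a, 0 ≤ a ∧
      ∫ θ in (0 : ℝ)..(2 * π),
          (1 + (-(B ^ (-(1 / 2 : ℝ))) * (z.2 - k * sin θ)) ^ 2
            + (-(B ^ (-(1 / 2 : ℝ))) * (z.1 - k * cos θ)) ^ 2) ^ p
        = ∫ t in -π..π, (1 + B⁻¹ * (a ^ 2 + k ^ 2 - 2 * a * k * cos t)) ^ p := by
  obtain ⟨a, φ, ha, hdist⟩ := exists_polar_sq_dist_eq z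
  set g : ℝ → ℝ := fun t => (1 + B⁻¹ * (a ^ 2 + k ^ 2 - 2 * a * k * cos t)) ^ p
  have hscale : (B ^ (-(1 / 2 : ℝ))) ^ 2 = B⁻¹ := by
    rw [rpow_neg hB.le, ← sqrt_eq_rpow, inv_pow, sq_sqrt hB.le]
  have hperiodic : Function.Periodic g (2 * π) := fun t => by simp only [g, cos_add_two_pi]
  refine ⟨a, ha, ?_⟩
  calc _ = ∫ θ in (0 : ℝ)..0 + 2 * π, g (θ - φ) := by
        rw [zero_add]
        refine integral_congr fun θ _ => ?_
        simp only [g]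
        rw [← hdist]
        congr 1
        linear_combination ((z.1 - k * cos θ) ^ 2 + (z.2 - k * sin θ) ^ 2) * hscale
    _ = ∫ t in -π..-π + 2 * π, g t := hperiodic.intervalIntegral_comp_sub_eq φ 0 (-π)
    _ = ∫ t in -π..π, g t := by ring_nf

/-- for `V(x) = ⟨x⟩^{-ρ}`, `ρ > 1`, and
`V_B(x,y) = V(−B^{-1/2}y, −B^{-1/2}x)`, the circular average
`(V_B * δ_k)(z) = (1/2π)∫₀^{2π} V_B(z − k(cos θ, sin θ)) dθ` satisfies
`sup_z |(V_B * δ_k)(z)| ≤ C B^{1/2}/k` uniformly in `B ≥ B₀` and `k > 0`,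
with `C = C(ρ)`. -/
theorem circular_average_bound (ρ : ℝ) (hρ : 1 < ρ) :
    ∃ C : ℝ, 0 < C ∧
      ∀ B₀ : ℝ, 0 < B₀ → ∀ B : ℝ, B₀ ≤ B → ∀ k : ℝ, 0 < k → ∀ z : ℝ × ℝ,
        |(1 / (2 * π)) * ∫ θ in (0 : ℝ)..(2 * π),
            (1 + (-(B ^ (-(1 / 2 : ℝ))) * (z.2 - k * Real.sin θ)) ^ 2
               + (-(B ^ (-(1 / 2 : ℝ))) * (z.1 - k * Real.cos θ)) ^ 2) ^ (-(ρ / 2))|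
          ≤ C * B ^ ((1 : ℝ) / 2) / k := by
  set M := ∫ u : ℝ, (1 + u ^ 2) ^ (-(ρ / 2))
  refine ⟨M / 2, by linarith [integral_one_add_sq_rpow_neg_pos hρ], ?_⟩
  intro B₀ hB₀ B hB₀B k hk z
  have hπ := pi_pos
  have hB : 0 < B := hB₀.trans_le hB₀B
  obtain ⟨a, ha, hshift⟩ :=
    exists_intervalIntegral_circle_eq_intervalIntegral_cos hB (-(ρ / 2)) k z
  have hnonneg :
      0 ≤ ∫ t in -π..π, (1 + B⁻¹ * (a ^ 2 + k ^ 2 - 2 * a * k * cos t)) ^ (-(ρ / 2)) :=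
    integral_nonneg (by linarith) fun t _ =>
      rpow_nonneg (by have := sq_add_sq_sub_two_mul_mul_cos_nonneg a k t; positivity) _
  rw [hshift, abs_of_nonneg (by positivity)]
  calc _ ≤ 1 / (2 * π) * (π * √B / k * M) := by
        gcongr
        exact intervalIntegral_one_add_inv_mul_rpow_neg_le hρ ha hk hB
    _ = M / 2 * B ^ ((1 : ℝ) / 2) / k := by
        rw [← sqrt_eq_rpow]
        field_simp
end

section
/- For the radial function W_B(z) = (B^{-1}|z|² + 1)^{-ρ/2} on ℝ² with ρ > 1, and for r, k ≥ 0: (1/(2π)) ∫₀^{2π} (B^{-1}(k cos θ − r)² + B^{-1} k² sin²θ + 1)^{-ρ/2} dθ ≤ (2/π) ∫₀^∞ ((2θ/π)² B^{-1}k² + 1)^{-ρ/2} dθ = C_ρ B^{1/2}/k. -/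
/-!
Dropping the term `B⁻¹ (k cos θ - r)²` only increases the weight, which leaves the function
`(B⁻¹ k² sin² θ + 1)^(-ρ/2)`; it is `π`-periodic and symmetric about `π/2`, so its average
over `[0, 2π]` is `2/π` times its integral over `[0, π/2]`. There Jordan's inequality
`sin θ ≥ 2θ/π` bounds it by `((2θ/π)² B⁻¹ k² + 1)^(-ρ/2)`, which is integrable on `(0, ∞)`
because `ρ > 1`. The substitution `t = k θ / √B` gives the closed form.
-/

open Real MeasureTheory intervalIntegral

theorem continuous_add_one_rpow {f : ℝ → ℝ} (hf : Continuous f) (hf₀ : ∀ x, 0 ≤ f x) (s : ℝ) :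
    Continuous fun x => (f x + 1) ^ s :=
  (hf.add continuous_const).rpow_const fun x => .inl (by linarith [hf₀ x] : f x + 1 ≠ 0)

theorem integrable_sq_mul_add_one_rpow_neg {p : ℝ} (hp : 1 < p) {m : ℝ} (hm : m ≠ 0) :
    Integrable fun t : ℝ => ((m * t) ^ 2 + 1) ^ (-(p / 2)) := by
  have h := (integrable_rpow_neg_one_add_norm_sq (E := ℝ) (μ := volume) (r := p)
    (by simpa using hp)).comp_mul_left' hm
  simpa only [norm_eq_abs, sq_abs, add_comm (1 : ℝ), neg_div] using h

theorem integral_zero_two_pi_eq_four_mul_integral_zero_pi_div_two {G : ℝ → ℝ}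
    (hG : Continuous G) (hper : Function.Periodic G π) (hsymm : ∀ θ, G (π - θ) = G θ) :
    ∫ θ in 0..2 * π, G θ = 4 * ∫ θ in 0..π / 2, G θ := by
  have hhalf : ∫ θ in 0..2 * π, G θ = 2 * ∫ θ in 0..π, G θ := by
    rw [← integral_add_adjacent_intervals (hG.intervalIntegrable 0 π)
      (hG.intervalIntegrable π (2 * π)), two_mul π,
      hper.intervalIntegral_add_eq π 0, zero_add, two_mul]
  have hquarter : ∫ θ in 0..π, G θ = 2 * ∫ θ in 0..π / 2, G θ := by
    have hreflect : ∫ θ in π / 2..π, G θ = ∫ θ in 0..π / 2, G θ := by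
      simpa only [hsymm, sub_zero, sub_half] using
        (integral_comp_sub_left G π (a := 0) (b := π / 2)).symm
    rw [← integral_add_adjacent_intervals (hG.intervalIntegrable 0 (π / 2))
      (hG.intervalIntegrable (π / 2) π), hreflect, two_mul]
  rw [hhalf, hquarter]; ring

theorem integral_sin_sq_mul_add_one_rpow_le {ρ a : ℝ} (hρ : 1 < ρ) (ha : 0 < a) :
    ∫ θ in 0..π / 2, (sin θ ^ 2 * a + 1) ^ (-(ρ / 2))
      ≤ ∫ θ in Set.Ioi 0, ((2 * θ / π) ^ 2 * a + 1) ^ (-(ρ / 2)) := by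
  have hint :
      IntegrableOn (fun θ : ℝ => ((2 * θ / π) ^ 2 * a + 1) ^ (-(ρ / 2))) (Set.Ioi 0) := by
    have h := integrable_sq_mul_add_one_rpow_neg hρ (m := 2 * √a / π) (by positivity)
    refine h.integrableOn.congr_fun (fun θ _ => ?_) measurableSet_Ioi
    simp only [mul_pow, div_pow, sq_sqrt ha.le]; ring_nf
  calc ∫ θ in 0..π / 2, (sin θ ^ 2 * a + 1) ^ (-(ρ / 2))
      ≤ ∫ θ in 0..π / 2, ((2 * θ / π) ^ 2 * a + 1) ^ (-(ρ / 2)) := by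
        refine integral_mono_on (by positivity) ?_ ?_ fun θ hθ => ?_
        · exact (continuous_add_one_rpow (by fun_prop) (fun _ => by positivity) _)
            |>.intervalIntegrable _ _
        · exact (continuous_add_one_rpow (by fun_prop) (fun _ => by positivity) _)
            |>.intervalIntegrable _ _
        have hjordan : 2 * θ / π ≤ sin θ := by
          simpa only [mul_div_right_comm] using mul_le_sin hθ.1 hθ.2
        apply rpow_le_rpow_of_nonpos (by positivity) _ (by linarith)
        have hθ₀ : 0 ≤ 2 * θ / π := by have := hθ.1; positivity
        gcongr
    _ ≤ ∫ θ in Set.Ioi 0, ((2 * θ / π) ^ 2 * a + 1) ^ (-(ρ / 2)) := by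
        rw [integral_of_le (by positivity)]
        exact setIntegral_mono_set hint (.of_forall fun _ => by positivity)
          Set.Ioc_subset_Ioi_self.eventuallyLE

theorem integral_Ioi_sq_mul_sq_add_one_rpow {s c : ℝ} (hc : 0 < c) :
    ∫ θ in Set.Ioi 0, ((2 * θ / π) ^ 2 * c ^ 2 + 1) ^ s
      = c⁻¹ * ∫ t in Set.Ioi 0, ((2 * t / π) ^ 2 + 1) ^ s := by
  have h := integral_comp_mul_left_Ioi (fun t => ((2 * t / π) ^ 2 + 1) ^ s) 0 hc
  rw [mul_zero, smul_eq_mul] at h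
  rw [← h]
  congr! 3 with θ
  ring

theorem averaging_estimate_general (ρ : ℝ) (hρ : 1 < ρ) (B : ℝ) (hB : 0 < B)
    (r k : ℝ) (hk : 0 < k) :
    ((1 / (2 * π)) * ∫ θ in (0 : ℝ)..(2 * π),
        (B⁻¹ * (k * Real.cos θ - r) ^ 2 + B⁻¹ * (k * Real.sin θ) ^ 2 + 1) ^ (-(ρ / 2)))
      ≤ (2 / π) * ∫ θ in Set.Ioi (0 : ℝ), ((2 * θ / π) ^ 2 * B⁻¹ * k ^ 2 + 1) ^ (-(ρ / 2))
    ∧ ((2 / π) * ∫ θ in Set.Ioi (0 : ℝ), ((2 * θ / π) ^ 2 * B⁻¹ * k ^ 2 + 1) ^ (-(ρ / 2)))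
      = ((2 / π) * ∫ t in Set.Ioi (0 : ℝ), ((2 * t / π) ^ 2 + 1) ^ (-(ρ / 2)))
          * B ^ ((1 : ℝ) / 2) / k := by
  set c := k / √B with hc_def
  have hc : 0 < c := by positivity
  have hc_sq : B⁻¹ * k ^ 2 = c ^ 2 := by rw [div_pow, sq_sqrt hB.le, inv_mul_eq_div]
  simp only [mul_assoc _ B⁻¹, hc_sq]
  constructor
  · calc (1 / (2 * π)) * ∫ θ in 0..2 * π,
          (B⁻¹ * (k * cos θ - r) ^ 2 + B⁻¹ * (k * sin θ) ^ 2 + 1) ^ (-(ρ / 2))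
        ≤ (1 / (2 * π)) * ∫ θ in 0..2 * π, (sin θ ^ 2 * c ^ 2 + 1) ^ (-(ρ / 2)) := by
          gcongr
          refine integral_mono_on (by positivity) ?_ ?_ fun θ _ => ?_
          · exact (continuous_add_one_rpow (by fun_prop) (fun _ => by positivity) _)
              |>.intervalIntegrable _ _
          · exact (continuous_add_one_rpow (by fun_prop) (fun _ => by positivity) _)
              |>.intervalIntegrable _ _
          apply rpow_le_rpow_of_nonpos (by positivity) _ (by linarith)
          have hsin : sin θ ^ 2 * c ^ 2 = B⁻¹ * (k * sin θ) ^ 2 := by rw [← hc_sq]; ring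
          have hcos : 0 ≤ B⁻¹ * (k * cos θ - r) ^ 2 := by positivity
          linarith
      _ = (2 / π) * ∫ θ in 0..π / 2, (sin θ ^ 2 * c ^ 2 + 1) ^ (-(ρ / 2)) := by
          rw [integral_zero_two_pi_eq_four_mul_integral_zero_pi_div_two
            (continuous_add_one_rpow (by fun_prop) (fun _ => by positivity) _)
            (fun θ => by simp only [sin_add_pi, neg_sq]) (fun θ => by simp only [sin_pi_sub])]
          ring
      _ ≤ _ := by gcongr; exact integral_sin_sq_mul_add_one_rpow_le hρ (by positivity)
  · rw [integral_Ioi_sq_mul_sq_add_one_rpow hc, hc_def, inv_div, sqrt_eq_rpow]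
    ring

/-- the key averaging estimate: for `ρ > 1`, `B > 0`, `r ≥ 0`, `k > 0`,
the circular average of the radial weight is bounded by
`(2/π)∫₀^∞((2θ/π)² B^{-1}k² + 1)^{-ρ/2} dθ`, which equals `C_ρ B^{1/2}/k` with
`C_ρ = (2/π)∫₀^∞((2t/π)² + 1)^{-ρ/2} dt`. -/
theorem averaging_estimate (ρ : ℝ) (hρ : 1 < ρ) (B : ℝ) (hB : 0 < B)
    (r k : ℝ) (hr : 0 ≤ r) (hk : 0 < k) :
    ((1 / (2 * π)) * ∫ θ in (0 : ℝ)..(2 * π),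
        (B⁻¹ * (k * Real.cos θ - r) ^ 2 + B⁻¹ * (k * Real.sin θ) ^ 2 + 1) ^ (-(ρ / 2)))
      ≤ (2 / π) * ∫ θ in Set.Ioi (0 : ℝ), ((2 * θ / π) ^ 2 * B⁻¹ * k ^ 2 + 1) ^ (-(ρ / 2))
    ∧ ((2 / π) * ∫ θ in Set.Ioi (0 : ℝ), ((2 * θ / π) ^ 2 * B⁻¹ * k ^ 2 + 1) ^ (-(ρ / 2)))
      = ((2 / π) * ∫ t in Set.Ioi (0 : ℝ), ((2 * t / π) ^ 2 + 1) ^ (-(ρ / 2)))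
          * B ^ ((1 : ℝ) / 2) / k :=
  averaging_estimate_general ρ hρ B hB r k hk
end
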